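/- Let p_i, p_j : [0,∞) → ℝ³ be twice differentiable with r = p_i − p_j, v = ṙ, and accelerations satisfying 2⟨r,u_i − u_j⟩ ≥ −2‖v‖² − 2(γ₁+γ₂)⟨r,v⟩ − γ₁γ₂(‖r‖² − r_s²) for all t ≥ 0, where u_i − u_j = r̈ and γ₁, γ₂ > 0. If ‖r(0)‖² ≥ r_s² and 2⟨r(0),v(0)⟩ + γ₁(‖r(0)‖² − r_s²) ≥ 0, then ‖r(t)‖ ≥ r_s for all t ≥ 0. -/

import Mathlib

/-!
Along the trajectory write `h = ‖r‖² − r_s²`, so `ḣ = 2⟪r, v⟫` and `ḧ = 2⟪r, r̈⟫ + 2‖v‖²`. The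
constraint says exactly `ψ̇₁ + γ₂ ψ₁ ≥ 0` for `ψ₁ = ḣ + γ₁ h`, and a differential inequality
`ḟ + K f ≥ 0` preserves `f ≥ 0` forward in time, because `t ↦ e^{K t} f t` is monotone.
Applied to `ψ₁` and then to `h`, this keeps `h ≥ 0`.
-/

open Set
open scoped RealInnerProductSpace

theorem nonneg_of_deriv_add_mul_nonneg {f f' : ℝ → ℝ} {K a : ℝ}
    (hf : ∀ t, HasDerivAt f (f' t) t) (hK : ∀ t ∈ Ici a, 0 ≤ f' t + K * f t) (ha : 0 ≤ f a) :
    ∀ t ∈ Ici a, 0 ≤ f t := by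
  set g : ℝ → ℝ := fun t => Real.exp (K * t) * f t
  have hg : ∀ t, HasDerivAt g (Real.exp (K * t) * (f' t + K * f t)) t := fun t => by
    have hexp : HasDerivAt (fun t => Real.exp (K * t)) (Real.exp (K * t) * K) t := by
      simpa using ((hasDerivAt_id t).const_mul K).exp
    exact (hexp.mul (hf t)).congr_deriv (by ring)
  have hmono : MonotoneOn g (Ici a) :=
    monotoneOn_of_hasDerivWithinAt_nonneg (convex_Ici a)
      (fun t _ => (hg t).continuousAt.continuousWithinAt)
      (fun t _ => (hg t).hasDerivWithinAt)
      (fun t ht => mul_nonneg (Real.exp_pos _).le (hK t (interior_subset ht)))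
  intro t ht
  have hgt : 0 ≤ g t :=
    (mul_nonneg (Real.exp_pos _).le ha).trans (hmono self_mem_Ici ht ht)
  exact nonneg_of_mul_nonneg_right hgt (Real.exp_pos _)

theorem nonneg_of_second_order_hocbf {h h' h'' : ℝ → ℝ} {γ₁ γ₂ a : ℝ}
    (hh : ∀ t, HasDerivAt h (h' t) t) (hh' : ∀ t, HasDerivAt h' (h'' t) t)
    (hψ₂ : ∀ t ∈ Ici a, 0 ≤ h'' t + (γ₁ + γ₂) * h' t + γ₁ * γ₂ * h t)
    (h0 : 0 ≤ h a) (hψ₁ : 0 ≤ h' a + γ₁ * h a) :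
    ∀ t ∈ Ici a, 0 ≤ h t := by
  have hψ₁_nonneg : ∀ t ∈ Ici a, 0 ≤ h' t + γ₁ * h t :=
    nonneg_of_deriv_add_mul_nonneg (K := γ₂) (fun t => (hh' t).add ((hh t).const_mul γ₁))
      (fun t ht => by linarith [hψ₂ t ht]) hψ₁
  exact nonneg_of_deriv_add_mul_nonneg hh hψ₁_nonneg h0

theorem hocbf_collision_avoidance_general
    (pi pj vi vj ui uj : ℝ → EuclideanSpace ℝ (Fin 3)) (rs γ₁ γ₂ : ℝ)
    (hpi : ∀ t, HasDerivAt pi (vi t) t) (hpj : ∀ t, HasDerivAt pj (vj t) t)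
    (hvi : ∀ t, HasDerivAt vi (ui t) t) (hvj : ∀ t, HasDerivAt vj (uj t) t)
    (hconstraint : ∀ t ∈ Set.Ici (0 : ℝ),
      2 * ⟪pi t - pj t, ui t - uj t⟫ ≥
        -2 * ‖vi t - vj t‖ ^ 2 - 2 * (γ₁ + γ₂) * ⟪pi t - pj t, vi t - vj t⟫
          - γ₁ * γ₂ * (‖pi t - pj t‖ ^ 2 - rs ^ 2))
    (h0 : ‖pi 0 - pj 0‖ ^ 2 ≥ rs ^ 2)
    (hψ1 : 2 * ⟪pi 0 - pj 0, vi 0 - vj 0⟫ + γ₁ * (‖pi 0 - pj 0‖ ^ 2 - rs ^ 2) ≥ 0) :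
    ∀ t ∈ Set.Ici (0 : ℝ), ‖pi t - pj t‖ ≥ rs := by
  have hr : ∀ t, HasDerivAt (fun t => pi t - pj t) (vi t - vj t) t :=
    fun t => (hpi t).sub (hpj t)
  have hv : ∀ t, HasDerivAt (fun t => vi t - vj t) (ui t - uj t) t :=
    fun t => (hvi t).sub (hvj t)
  have hsafe := nonneg_of_second_order_hocbf
    (h := fun t => ‖pi t - pj t‖ ^ 2 - rs ^ 2) (γ₁ := γ₁) (γ₂ := γ₂)
    (fun t => (hr t).norm_sq.sub_const _) (fun t => ((hr t).inner ℝ (hv t)).const_mul 2)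
    (fun t ht => by
      have hvv := real_inner_self_eq_norm_sq (vi t - vj t)
      linarith [hconstraint t ht])
    (sub_nonneg.2 h0) hψ1
  intro t ht
  exact (abs_le_of_sq_le_sq' (sub_nonneg.1 (hsafe t ht)) (norm_nonneg _)).2

/-- HOCBF collision avoidance for two double-integrator agents: if the affine
second-order HOCBF constraint holds for all `t ≥ 0` and the initial conditions
`‖r(0)‖² ≥ r_s²` and `2⟪r(0),v(0)⟫ + γ₁(‖r(0)‖² − r_s²) ≥ 0` hold,
then `‖r(t)‖ ≥ r_s` for all `t ≥ 0`. -/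
theorem hocbf_collision_avoidance
    (pi pj vi vj ui uj : ℝ → EuclideanSpace ℝ (Fin 3)) (rs γ₁ γ₂ : ℝ)
    (hγ₁ : 0 < γ₁) (hγ₂ : 0 < γ₂)
    (hpi : ∀ t, HasDerivAt pi (vi t) t) (hpj : ∀ t, HasDerivAt pj (vj t) t)
    (hvi : ∀ t, HasDerivAt vi (ui t) t) (hvj : ∀ t, HasDerivAt vj (uj t) t)
    (hcont : Continuous ui) (hcont' : Continuous uj)
    (hconstraint : ∀ t ∈ Set.Ici (0 : ℝ),
      2 * ⟪pi t - pj t, ui t - uj t⟫ ≥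
        -2 * ‖vi t - vj t‖ ^ 2 - 2 * (γ₁ + γ₂) * ⟪pi t - pj t, vi t - vj t⟫
          - γ₁ * γ₂ * (‖pi t - pj t‖ ^ 2 - rs ^ 2))
    (h0 : ‖pi 0 - pj 0‖ ^ 2 ≥ rs ^ 2)
    (hψ1 : 2 * ⟪pi 0 - pj 0, vi 0 - vj 0⟫ + γ₁ * (‖pi 0 - pj 0‖ ^ 2 - rs ^ 2) ≥ 0) :
    ∀ t ∈ Set.Ici (0 : ℝ), ‖pi t - pj t‖ ≥ rs :=
  hocbf_collision_avoidance_general pi pj vi vj ui uj rs γ₁ γ₂ hpi hpj hvi hvj hconstraint h0 hψ1
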